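/- Let n be even, suppose that for every (n−2)-admissible list M′ there is an (M′)-decomposition of K_{n−2}, and suppose that the list (M, 4^{(n−2)/2}) obtained from M by adjoining (n−2)/2 occurrences of 4 is an n-ancestor list with ν_n(M) = 0. Then there is an (M, 4^{(n−2)/2})-decomposition of K_n. -/

import Mathlib

open SimpleGraph

/-- A subgraph `H` of a graph is a cycle with `m` edges: it is connected,
every vertex of `H` has exactly two neighbours in `H`, and `H` has `m` edges. -/
def IsCycleSub {V : Type*} {G : SimpleGraph V} (H : G.Subgraph) (m : ℕ) : Prop :=
  H.coe.Connected ∧ (∀ v ∈ H.verts, (H.neighborSet v).ncard = 2) ∧ H.edgeSet.ncard = m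

/-- An `(M)`-decomposition of an even graph `G`: a family of cycles, with lengths
given by the entries of the list `M`, whose edge sets partition the edge set of `G`. -/
def CycleDecomp {V : Type*} (G : SimpleGraph V) (M : List ℕ) : Prop :=
  ∃ f : Fin M.length → G.Subgraph,
    (∀ i, IsCycleSub (f i) (M.get i)) ∧
    (∀ i j, i ≠ j → Disjoint (f i).edgeSet (f j).edgeSet) ∧
    (⋃ i, (f i).edgeSet) = G.edgeSet

/-- An `(M)`-decomposition of an odd graph `G`: a family of cycles with lengths given by
the entries of `M`, together with a perfect matching, whose edge sets partition `G`. -/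
def CycleDecompM {V : Type*} (G : SimpleGraph V) (M : List ℕ) : Prop :=
  ∃ (f : Fin M.length → G.Subgraph) (I : G.Subgraph),
    I.IsPerfectMatching ∧
    (∀ i, IsCycleSub (f i) (M.get i)) ∧
    (∀ i j, i ≠ j → Disjoint (f i).edgeSet (f j).edgeSet) ∧
    (∀ i, Disjoint (f i).edgeSet I.edgeSet) ∧
    ((⋃ i, (f i).edgeSet) ∪ I.edgeSet) = G.edgeSet

/-- An `(M)`-decomposition of the complete graph `K_n`: cycles only when `n` is odd
(`K_n` is an even graph), cycles plus a perfect matching when `n` is even. -/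
def KDecomp (n : ℕ) (M : List ℕ) : Prop :=
  (Odd n ∧ CycleDecomp (⊤ : SimpleGraph (Fin n)) M) ∨
  (Even n ∧ CycleDecompM (⊤ : SimpleGraph (Fin n)) M)

/-- A list `M` is `n`-admissible. -/
def Admissible (n : ℕ) (M : List ℕ) : Prop :=
  (∀ m ∈ M, 3 ≤ m ∧ m ≤ n) ∧ M.sum = n * ((n - 1) / 2)

/-- A list `M` is an `n`-ancestor list. -/
def AncestorList (n : ℕ) (M : List ℕ) : Prop :=
  Admissible n M ∧
  (∑ i ∈ Finset.Icc 6 (n - 1), M.count i) ≤ 1 ∧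
  (3 ≤ M.count 5 → (2 * M.count 4 : ℤ) ≤ (n : ℤ) - 6) ∧
  (2 ≤ M.count 5 → (3 * M.count 3 : ℤ) ≤ (n : ℤ) - 10) ∧
  (1 ≤ M.count 4 → 1 ≤ M.count 5 → (3 * M.count 3 : ℤ) ≤ (n : ℤ) - 9) ∧
  (1 ≤ M.count 4 → M.count (n - 2) = 0 ∧ M.count (n - 1) = 0) ∧
  (1 ≤ M.count 5 → M.count (n - 4) = 0 ∧ M.count (n - 3) = 0 ∧
    M.count (n - 2) = 0 ∧ M.count (n - 1) = 0)

/-!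
Delete two vertices `u`, `v` of `K_n`. Every entry of `M` lies in `[3, n - 2]` (an entry `n - 1`
is excluded by the ancestor conditions because the list contains a `4`), and the sum of `M` is
`|E(K_n)| - 4 · (n - 2) / 2 = |E(K_{n-2})|`, so `M` is `(n - 2)`-admissible and `K_{n-2}` has an
`(M)`-decomposition, with perfect matching `I`. Pair the other vertices as `{a_k, b_k}`: the
4-cycles `u a_k v b_k` use every edge between `{u, v}` and the rest exactly once, and `I + uv` is a
perfect matching of `K_n`.
-/

lemma Sym2.mk_mem_image_map {α β : Type*} {f : α → β} {T : Set (Sym2 α)} {x y : β} :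
    s(x, y) ∈ Sym2.map f '' T ↔ ∃ a b, x = f a ∧ y = f b ∧ s(a, b) ∈ T := by
  constructor
  · rintro ⟨e, he, hxy⟩
    induction e with
    | _ a b =>
      rw [Sym2.map_mk, Sym2.eq_iff] at hxy
      rcases hxy with ⟨rfl, rfl⟩ | ⟨rfl, rfl⟩
      exacts [⟨a, b, rfl, rfl, he⟩, ⟨b, a, rfl, rfl, Sym2.eq_swap ▸ he⟩]
  · rintro ⟨a, b, rfl, rfl, hab⟩
    exact ⟨s(a, b), hab, rfl⟩

namespace SimpleGraph

variable {V W : Type*} {G : SimpleGraph V} {G' : SimpleGraph W}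

lemma Subgraph.Connected.map_hom {H : G.Subgraph} (f : G →g G') (hH : H.Connected) :
    (H.map f).Connected := by
  let φ : H.coe →g (H.map f).coe :=
    { toFun := fun v => ⟨f v, Set.mem_image_of_mem f v.2⟩
      map_rel' := fun {v w} h => ⟨v, w, h, rfl, rfl⟩ }
  refine ⟨hH.coe.map φ ?_⟩
  rintro ⟨_, v, hv, rfl⟩
  exact ⟨⟨v, hv⟩, rfl⟩

lemma Subgraph.neighborSet_map_of_injective {H : G.Subgraph} {f : G →g G'}
    (hf : Function.Injective f) (v : V) :
    (H.map f).neighborSet (f v) = f '' H.neighborSet v := by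
  ext w
  constructor
  · rintro ⟨a, b, hab, ha, rfl⟩
    exact ⟨b, by rwa [hf ha] at hab, rfl⟩
  · rintro ⟨b, hb, rfl⟩
    exact ⟨v, b, hb, rfl, rfl⟩

lemma Walk.IsCycle.isCycleSub {u : V} {p : G.Walk u u} (hp : p.IsCycle) :
    IsCycleSub p.toSubgraph p.length := by
  refine ⟨p.toSubgraph_connected.coe, fun v hv => ?_, ?_⟩
  · exact hp.ncard_neighborSet_toSubgraph_eq_two (p.mem_verts_toSubgraph.mp hv)
  · classical
    rw [Walk.edgeSet_toSubgraph, ← p.length_edges, ← List.toFinset_card_of_nodup hp.edges_nodup,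
      ← Set.ncard_coe_finset]
    congr 1
    ext e
    simp [Walk.edgeSet]

def crossEdges (α β : Type*) : Set (Sym2 (α ⊕ β)) :=
  Set.range fun p : α × β => s(.inl p.1, .inr p.2)

lemma disjoint_image_map_inl_crossEdges {α β : Type*} (T : Set (Sym2 α)) :
    Disjoint (Sym2.map Sum.inl '' T) (crossEdges α β) := by
  rw [Set.disjoint_left]
  rintro _ ⟨e, -, rfl⟩ ⟨⟨a, b⟩, h⟩
  induction e with
  | _ x y => simp at h

lemma edgeSet_top_sum {α β : Type*} :
    (⊤ : SimpleGraph (α ⊕ β)).edgeSet = Sym2.map Sum.inl '' (⊤ : SimpleGraph α).edgeSet ∪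
      crossEdges α β ∪ Sym2.map Sum.inr '' (⊤ : SimpleGraph β).edgeSet := by
  ext e
  induction e with
  | _ x y =>
    simp only [Set.mem_union, Sym2.mk_mem_image_map]
    rcases x with a | a <;> rcases y with b | b <;> simp [crossEdges]

lemma edgeSet_top_bool : (⊤ : SimpleGraph Bool).edgeSet = {s(false, true)} := by
  ext e
  induction e with
  | _ x y => cases x <;> cases y <;> simp [Sym2.eq_swap]

end SimpleGraph

section Decompositions

variable {V W : Type*} {G : SimpleGraph V} {G' : SimpleGraph W}

lemma IsCycleSub.map {H : G.Subgraph} {m : ℕ} {f : G →g G'} (hf : Function.Injective f)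
    (hH : IsCycleSub H m) : IsCycleSub (H.map f) m := by
  obtain ⟨hconn, hdeg, hcard⟩ := hH
  refine ⟨(Subgraph.Connected.map_hom f ⟨hconn⟩).coe, ?_, ?_⟩
  · rintro _ ⟨v, hv, rfl⟩
    rw [Subgraph.neighborSet_map_of_injective hf, Set.ncard_image_of_injective _ hf]
    exact hdeg v hv
  · rw [Subgraph.edgeSet_map, Set.ncard_image_of_injective _ (Sym2.map.injective hf)]
    exact hcard

def CycleDecompOn (G : SimpleGraph V) (M : List ℕ) (S : Set (Sym2 V)) : Prop :=
  ∃ f : Fin M.length → G.Subgraph,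
    (∀ i, IsCycleSub (f i) (M.get i)) ∧
    (∀ i j, i ≠ j → Disjoint (f i).edgeSet (f j).edgeSet) ∧
    (⋃ i, (f i).edgeSet) = S

lemma cycleDecompM_iff {M : List ℕ} :
    CycleDecompM G M ↔ ∃ I : G.Subgraph, I.IsPerfectMatching ∧
      ∃ S, CycleDecompOn G M S ∧ Disjoint S I.edgeSet ∧ S ∪ I.edgeSet = G.edgeSet := by
  constructor
  · rintro ⟨f, I, hI, hcyc, hdisj, hdisjI, hcover⟩
    exact ⟨I, hI, _, ⟨f, hcyc, hdisj, rfl⟩, Set.disjoint_iUnion_left.mpr hdisjI, hcover⟩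
  · rintro ⟨I, hI, _, ⟨f, hcyc, hdisj, rfl⟩, hdisjI, hcover⟩
    exact ⟨f, I, hI, hcyc, hdisj, Set.disjoint_iUnion_left.mp hdisjI, hcover⟩

lemma cycleDecompOn_of_equiv {ι : Type*} {M : List ℕ} (e : Fin M.length ≃ ι)
    (f : ι → G.Subgraph) (len : ι → ℕ) (hlen : ∀ i, M.get i = len (e i))
    (hcyc : ∀ i, IsCycleSub (f i) (len i))
    (hdisj : Pairwise fun i j => Disjoint (f i).edgeSet (f j).edgeSet) :
    CycleDecompOn G M (⋃ i, (f i).edgeSet) :=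
  ⟨f ∘ e, fun i => hlen i ▸ hcyc (e i), fun _ _ hij => hdisj (e.injective.ne hij),
    e.iSup_comp (g := fun i => (f i).edgeSet)⟩

lemma CycleDecompOn.append {M₁ M₂ : List ℕ} {S₁ S₂ : Set (Sym2 V)}
    (h₁ : CycleDecompOn G M₁ S₁) (h₂ : CycleDecompOn G M₂ S₂) (hS : Disjoint S₁ S₂) :
    CycleDecompOn G (M₁ ++ M₂) (S₁ ∪ S₂) := by
  obtain ⟨f₁, hcyc₁, hdisj₁, rfl⟩ := h₁
  obtain ⟨f₂, hcyc₂, hdisj₂, rfl⟩ := h₂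
  have := cycleDecompOn_of_equiv ((finCongr List.length_append).trans finSumFinEquiv.symm)
    (Sum.elim f₁ f₂) (Sum.elim M₁.get M₂.get) ?_ ?_ ?_
  · simpa [Set.iUnion_sum] using this
  · intro i
    obtain ⟨i, rfl⟩ := (finCongr List.length_append).symm.surjective i
    induction i using Fin.addCases with
    | left k => simp [List.getElem_append_left]
    | right k => simp [List.getElem_append_right]
  · rintro (k | k)
    exacts [hcyc₁ k, hcyc₂ k]
  · rintro (k | k) (l | l) hkl
    · exact hdisj₁ k l (by simpa using hkl)
    · exact hS.mono (Set.subset_iUnion (fun i => (f₁ i).edgeSet) k)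
        (Set.subset_iUnion (fun i => (f₂ i).edgeSet) l)
    · exact hS.symm.mono (Set.subset_iUnion (fun i => (f₂ i).edgeSet) k)
        (Set.subset_iUnion (fun i => (f₁ i).edgeSet) l)
    · exact hdisj₂ k l (by simpa using hkl)

lemma CycleDecompOn.map {M : List ℕ} {S : Set (Sym2 V)} {f : G →g G'}
    (hf : Function.Injective f) (h : CycleDecompOn G M S) :
    CycleDecompOn G' M (Sym2.map f '' S) := by
  obtain ⟨c, hcyc, hdisj, rfl⟩ := h
  refine ⟨fun i => (c i).map f, fun i => (hcyc i).map hf, fun i j hij => ?_, ?_⟩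
  · simp only [Subgraph.edgeSet_map]
    exact (Set.disjoint_image_iff (Sym2.map.injective hf)).mpr (hdisj i j hij)
  · simp only [Subgraph.edgeSet_map, Set.image_iUnion]

lemma cycleDecompOn_replicate {q c : ℕ} (C : Fin q → G.Subgraph) (hcyc : ∀ k, IsCycleSub (C k) c)
    (hdisj : Pairwise fun k l => Disjoint (C k).edgeSet (C l).edgeSet) :
    CycleDecompOn G (List.replicate q c) (⋃ k, (C k).edgeSet) :=
  cycleDecompOn_of_equiv (finCongr List.length_replicate) C (fun _ => c) (by simp) hcyc hdisj

lemma CycleDecompM.map_iso {M : List ℕ} (e : G ≃g G') (h : CycleDecompM G M) :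
    CycleDecompM G' M := by
  obtain ⟨I, ⟨hmatch, hspan⟩, S, hS, hdisj, hcover⟩ := cycleDecompM_iff.mp h
  have hinj : Function.Injective (Sym2.map e) := Sym2.map.injective e.injective
  refine cycleDecompM_iff.mpr ⟨I.map e.toHom, ⟨hmatch.map e.toHom e.injective, ?_⟩,
    _, hS.map (f := e.toHom) e.injective, ?_, ?_⟩
  · intro w
    exact ⟨e.symm w, hspan _, e.apply_symm_apply w⟩
  · rw [Subgraph.edgeSet_map]
    exact (Set.disjoint_image_iff hinj).mpr hdisj
  · rw [Subgraph.edgeSet_map, ← Set.image_union, hcover, ← Subgraph.edgeSet_top,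
      ← Subgraph.edgeSet_map, Subgraph.map_iso_top, Subgraph.edgeSet_top]

end Decompositions

-- `K_{n-2}` lives on `κ × Bool`, paired as `a_k = (k, false)`, `b_k = (k, true)`; the two new
-- vertices are `u = Sum.inr false` and `v = Sum.inr true`.
def fourCycle {κ : Type*} (k : κ) :
    (⊤ : SimpleGraph ((κ × Bool) ⊕ Bool)).Walk (.inr false) (.inr false) :=
  .cons (v := .inl (k, false)) (by simp) <| .cons (v := .inr true) (by simp) <|
    .cons (v := .inl (k, true)) (by simp) <| .cons (by simp) .nil

lemma fourCycle_isCycle {κ : Type*} (k : κ) : (fourCycle k).IsCycle := by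
  simp [fourCycle, Walk.cons_isCycle_iff, Walk.cons_isPath_iff]

lemma mem_edgeSet_fourCycle {κ : Type*} {k : κ} {e : Sym2 ((κ × Bool) ⊕ Bool)} :
    e ∈ (fourCycle k).toSubgraph.edgeSet ↔ ∃ b c, e = s(.inl (k, b), .inr c) := by
  rw [Walk.edgeSet_toSubgraph]
  simp only [fourCycle, Walk.edgeSet, Walk.edges_cons, Walk.edges_nil, List.mem_cons,
    List.not_mem_nil, or_false, Set.mem_ofPred_eq, Bool.exists_bool, Sym2.eq_swap]
  tauto

lemma cycleDecompOn_crossEdges (q : ℕ) :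
    CycleDecompOn (⊤ : SimpleGraph ((Fin q × Bool) ⊕ Bool)) (List.replicate q 4)
      (crossEdges (Fin q × Bool) Bool) := by
  have hunion : ⋃ k, (fourCycle k).toSubgraph.edgeSet = crossEdges (Fin q × Bool) Bool := by
    ext e
    simp only [Set.mem_iUnion, mem_edgeSet_fourCycle, crossEdges, Set.mem_range, Prod.exists]
    exact ⟨fun ⟨k, b, c, he⟩ => ⟨k, b, c, he.symm⟩, fun ⟨k, b, c, he⟩ => ⟨k, b, c, he.symm⟩⟩
  rw [← hunion]
  refine cycleDecompOn_replicate _ (fun k => (fourCycle_isCycle k).isCycleSub) ?_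
  intro k l hkl
  rw [Set.disjoint_left]
  intro e hk hl
  obtain ⟨b, c, rfl⟩ := mem_edgeSet_fourCycle.mp hk
  obtain ⟨b', c', he⟩ := mem_edgeSet_fourCycle.mp hl
  have : (k = l ∧ b = b') ∧ c = c' := by simpa using he
  exact hkl this.1.1

lemma CycleDecompM.sum_bool {q : ℕ} {M : List ℕ}
    (h : CycleDecompM (⊤ : SimpleGraph (Fin q × Bool)) M) :
    CycleDecompM (⊤ : SimpleGraph ((Fin q × Bool) ⊕ Bool)) (M ++ List.replicate q 4) := by
  obtain ⟨I, ⟨hmatch, hspan⟩, S, hS, hdisj, hcover⟩ := cycleDecompM_iff.mp h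
  let ι := Embedding.completeGraph (Function.Embedding.inl : Fin q × Bool ↪ _ ⊕ Bool)
  have huv : (⊤ : SimpleGraph ((Fin q × Bool) ⊕ Bool)).Adj (.inr false) (.inr true) := by simp
  let J := I.map ι.toHom ⊔ (⊤ : SimpleGraph _).subgraphOfAdj huv
  have hJ : J.IsPerfectMatching := by
    refine ⟨(hmatch.map ι.toHom ι.injective).sup (Subgraph.IsMatching.subgraphOfAdj huv) ?_, ?_⟩
    · refine Set.disjoint_of_subset (Subgraph.support_subset_verts _)
        (Subgraph.support_subset_verts _) ?_
      simp [Set.disjoint_left, ι]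
    · rintro (x | b)
      · exact Or.inl ⟨x, hspan x, rfl⟩
      · cases b <;> simp [J]
  have hJedge : J.edgeSet = Sym2.map Sum.inl '' I.edgeSet ∪ {s(.inr false, .inr true)} := by
    rw [Subgraph.edgeSet_sup, Subgraph.edgeSet_map, edgeSet_subgraphOfAdj]
    rfl
  refine cycleDecompM_iff.mpr ⟨J, hJ, _, (hS.map (f := ι.toHom) ι.injective).append
    (cycleDecompOn_crossEdges q) (disjoint_image_map_inl_crossEdges S), ?_, ?_⟩
  · change Disjoint (Sym2.map Sum.inl '' S ∪ _) _
    rw [hJedge, Set.disjoint_union_left, Set.disjoint_union_right, Set.disjoint_union_right]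
    refine ⟨⟨(Set.disjoint_image_iff (Sym2.map.injective Sum.inl_injective)).mpr hdisj, ?_⟩,
      (disjoint_image_map_inl_crossEdges _).symm, ?_⟩
    · rw [Set.disjoint_singleton_right, Sym2.mk_mem_image_map]
      simp
    · simp [crossEdges]
  · change Sym2.map Sum.inl '' S ∪ _ ∪ _ = _
    rw [hJedge, edgeSet_top_sum, ← hcover, edgeSet_top_bool, Set.image_singleton, Sym2.map_mk,
      Set.image_union]
    ac_rfl

lemma KDecomp.add_two {m : ℕ} {M : List ℕ} (hm : Even m) (h : KDecomp m M) :
    KDecomp (m + 2) (M ++ List.replicate (m / 2) 4) := by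
  rcases h with ⟨hodd, -⟩ | ⟨-, hdec⟩
  · exact absurd hodd (Nat.not_odd_iff_even.mpr hm)
  have hhalf := Nat.div_two_mul_two_of_even hm
  have e₁ : Fin m ≃ Fin (m / 2) × Bool := Fintype.equivOfCardEq (by simp [hhalf])
  have e₂ : (Fin (m / 2) × Bool) ⊕ Bool ≃ Fin (m + 2) := Fintype.equivOfCardEq (by simp [hhalf])
  exact Or.inr ⟨hm.add even_two,
    ((hdec.map_iso (Iso.completeGraph e₁)).sum_bool).map_iso (Iso.completeGraph e₂)⟩

lemma Even.sub_two_mul_add_four_mul {n : ℕ} (hn : Even n) :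
    (n - 2) * ((n - 2 - 1) / 2) + (n - 2) / 2 * 4 = n * ((n - 1) / 2) := by
  obtain ⟨c, rfl⟩ := hn
  rcases c with _ | _ | c
  · rfl
  · rfl
  · have h₁ : (c + 2 + (c + 2) - 1) / 2 = c + 1 := by omega
    have h₂ : (c + 2 + (c + 2) - 2 - 1) / 2 = c := by omega
    have h₃ : (c + 2 + (c + 2) - 2) / 2 = c + 1 := by omega
    have h₄ : c + 2 + (c + 2) - 2 = 2 * c + 2 := by omega
    rw [h₁, h₂, h₃, h₄]
    ring_nf

lemma admissible_sub_two_of_ancestorList {n : ℕ} {M : List ℕ} (hn : Even n)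
    (hanc : AncestorList n (M ++ List.replicate ((n - 2) / 2) 4)) (hno : M.count n = 0) :
    Admissible (n - 2) M := by
  obtain ⟨⟨hmem, hsum⟩, -, -, -, -, hfour, -⟩ := hanc
  refine ⟨fun e he => ?_, ?_⟩
  · obtain ⟨h₃, hle⟩ := hmem e (List.mem_append_left _ he)
    have hne : e ≠ n := by
      rintro rfl
      exact List.count_eq_zero.mp hno he
    have hne' : e ≠ n - 1 := by
      rintro rfl
      have hcount : 1 ≤ (M ++ List.replicate ((n - 2) / 2) 4).count 4 := by
        obtain ⟨c, rfl⟩ := hn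
        rw [List.count_append, List.count_replicate_self]
        omega
      exact List.count_eq_zero.mp (hfour hcount).2 (List.mem_append_left _ he)
    omega
  · rw [List.sum_append, List.sum_replicate, smul_eq_mul] at hsum
    exact Nat.add_right_cancel (hsum.trans (Even.sub_two_mul_add_four_mul hn).symm)

/-- `n` even, many four-cycles, no Hamilton cycles. -/
theorem even_no_ham_many_fours (n : ℕ) (heven : Even n)
    (hind : ∀ M' : List ℕ, Admissible (n - 2) M' → KDecomp (n - 2) M')
    (M : List ℕ)
    (hanc : AncestorList n (M ++ List.replicate ((n - 2) / 2) 4))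
    (hno : M.count n = 0) :
    KDecomp n (M ++ List.replicate ((n - 2) / 2) 4) := by
  have hdec := hind M (admissible_sub_two_of_ancestorList heven hanc hno)
  rcases Nat.lt_or_ge n 2 with hn | hn
  · obtain rfl : n = 0 := by
      obtain ⟨c, rfl⟩ := heven
      omega
    simpa using hdec
  · obtain ⟨m, rfl⟩ := Nat.exists_eq_add_of_le' hn
    simpa using hdec.add_two ((Nat.even_add.mp heven).mpr even_two)
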